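/- Let N be a positive integer and T a positive real number, and for m = 0,…,N−1 define the chirp waveform ψ_m : [0,T] → ℂ by ψ_m(t) = exp(i·π/4)·exp(−i·π·(N/T²)·(t − m·T/N)²). Then for all m₁, m₂ in {0,…,N−1}, the integral ∫₀^T conj(ψ_{m₁}(t))·ψ_{m₂}(t) dt equals T if m₁ = m₂ and equals 0 otherwise. -/

import Mathlib

/-!
In `conj ψ_{m₁} · ψ_{m₂}` the quadratic terms of the two phases cancel, leaving a constant times
`exp (2πi (m₂ - m₁) t / T)`; over `[0, T]` this runs through an integer number of full periods,
so it integrates to `0` unless `m₁ = m₂`.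
-/

open Complex Real MeasureTheory

/-- The m-th continuous chirp waveform of an N-chirp OCDM system with symbol duration T:
ψ_m(t) = exp(i·π/4)·exp(−i·π·(N/T²)·(t − m·T/N)²). -/
noncomputable def chirp (N : ℕ) (T : ℝ) (m : Fin N) (t : ℝ) : ℂ :=
  Complex.exp ((Real.pi / 4) * Complex.I) *
    Complex.exp (-(Real.pi * Complex.I * ((N : ℂ) / (T : ℂ) ^ 2) *
      ((t : ℂ) - ((m : ℕ) : ℂ) * T / N) ^ 2))

theorem integral_exp_two_pi_I_int_mul_div {T : ℝ} (hT : T ≠ 0) (k : ℤ) :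
    ∫ t in (0 : ℝ)..T, exp (2 * π * I * k / T * t) = if k = 0 then (T : ℂ) else 0 := by
  split_ifs with hk
  · simp [hk]
  · have hT' : (T : ℂ) ≠ 0 := ofReal_ne_zero.mpr hT
    have hc : 2 * π * I * k / T ≠ 0 := by simp [hk, hT, pi_ne_zero, I_ne_zero]
    have hperiod : 2 * π * I * k / T * T = k * (2 * π * I) := by field_simp
    rw [integral_exp_mul_complex hc, hperiod, exp_int_mul_two_pi_mul_I]
    simp

theorem conj_chirp_mul_chirp {N : ℕ} {T : ℝ} (hT : T ≠ 0) (m₁ m₂ : Fin N) (t : ℝ) :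
    (starRingEnd ℂ) (chirp N T m₁ t) * chirp N T m₂ t =
      exp (π * I * ((m₁ : ℂ) ^ 2 - (m₂ : ℂ) ^ 2) / N) *
        exp (2 * π * I * ((m₂ - m₁ : ℤ) : ℂ) / T * t) := by
  have hN : (N : ℂ) ≠ 0 := Nat.cast_ne_zero.mpr m₁.pos.ne'
  have hT' : (T : ℂ) ≠ 0 := ofReal_ne_zero.mpr hT
  simp only [chirp, map_mul, ← exp_conj, map_neg, map_div₀, map_pow, map_sub, conj_I,
    conj_ofReal, map_natCast, map_ofNat]
  simp only [← Complex.exp_add]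
  congr 1
  push_cast
  field_simp
  ring

theorem stmt17_general (N : ℕ) (T : ℝ) (hT : 0 < T) (m₁ m₂ : Fin N) :
    ∫ t in (0 : ℝ)..T, (starRingEnd ℂ) (chirp N T m₁ t) * chirp N T m₂ t =
      if m₁ = m₂ then (T : ℂ) else 0 := by
  simp_rw [conj_chirp_mul_chirp hT.ne', intervalIntegral.integral_const_mul,
    integral_exp_two_pi_I_int_mul_div hT.ne']
  by_cases h : m₁ = m₂
  · simp [h]
  · have hk : ((m₂ : ℕ) - (m₁ : ℕ) : ℤ) ≠ 0 := by
      rw [sub_ne_zero, Ne, Nat.cast_inj, Fin.val_inj]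
      exact Ne.symm h
    simp [h, hk]

theorem stmt17 (N : ℕ) (hN : 0 < N) (T : ℝ) (hT : 0 < T) (m₁ m₂ : Fin N) :
    ∫ t in (0 : ℝ)..T, (starRingEnd ℂ) (chirp N T m₁ t) * chirp N T m₂ t =
      if m₁ = m₂ then (T : ℂ) else 0 :=
  stmt17_general N T hT m₁ m₂
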